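/- arXiv:1902.10257 — 2 statements merged into one kernel-verified Lean document; each statement's English description precedes it below -/
import Mathlib

section
/- Under assumptions (A1)–(A4) (L strictly positive, L(y,·) ∈ L¹(μ_prior), dominated uniformly in y by g ∈ L¹(μ_prior), and L(·,θ) continuous in y), the map y ↦ L(y,·)^{1/2} from Y to L²(X, μ_prior) is continuous. -/
open MeasureTheory Filter

lemma sqrt_sub_sq_le_abs {a b : ℝ} (ha : 0 ≤ a) (hb : 0 ≤ b) :
    (Real.sqrt a - Real.sqrt b) ^ 2 ≤ |a - b| := by
  rcases le_total b a with h | h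
  · rw [abs_of_nonneg (by linarith)]
    nlinarith [Real.sqrt_nonneg b, Real.sq_sqrt ha, Real.sq_sqrt hb,
      Real.sqrt_le_sqrt h, Real.sqrt_nonneg a]
  · rw [abs_of_nonpos (by linarith)]
    nlinarith [Real.sqrt_nonneg a, Real.sq_sqrt ha, Real.sq_sqrt hb,
      Real.sqrt_le_sqrt h, Real.sqrt_nonneg b]

/-- under (A1)-(A4) the map `y ↦ √L(y,·)` is continuous from `Y`
into `L²(X, μ_prior)`, expressed via convergence of the squared `L²` distance. -/
theorem sqrt_likelihood_L2_continuous {X Y : Type*} [MeasurableSpace X] [MetricSpace Y]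
    (μprior : Measure X) [IsProbabilityMeasure μprior]
    (L : Y → X → ℝ)
    (hLmeas : ∀ y, Measurable (L y))
    (hLpos : ∀ y, ∀ᵐ θ ∂μprior, 0 < L y θ)
    (hLint : ∀ y, Integrable (L y) μprior)
    (g : X → ℝ) (hg : Integrable g μprior)
    (hdom : ∀ y, ∀ᵐ θ ∂μprior, L y θ ≤ g θ)
    (hLcont : ∀ᵐ θ ∂μprior, Continuous (fun y => L y θ)) :
    ∀ y : Y, Tendsto
      (fun y' => ∫ θ, (Real.sqrt (L y' θ) - Real.sqrt (L y θ)) ^ 2 ∂μprior)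
      (nhds y) (nhds 0) := by
  intro y
  -- L¹ continuity at y via dominated convergence
  have hL1 : Tendsto (fun y' => ∫ θ, |L y' θ - L y θ| ∂μprior) (nhds y) (nhds 0) := by
    have := MeasureTheory.tendsto_integral_filter_of_dominated_convergence
      (μ := μprior) (l := nhds y)
      (F := fun y' θ => |L y' θ - L y θ|) (f := fun _ => (0 : ℝ))
      (bound := fun θ => g θ + g θ)
      (Eventually.of_forall fun y' =>
        (((hLmeas y').sub (hLmeas y)).abs).aestronglyMeasurable)
      (Eventually.of_forall fun y' => by
        filter_upwards [hLpos y', hLpos y, hdom y', hdom y] with θ h1 h2 h3 h4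
        rw [Real.norm_eq_abs, abs_abs]
        calc |L y' θ - L y θ| ≤ |L y' θ| + |L y θ| := abs_sub _ _
          _ ≤ g θ + g θ := by
              rw [abs_of_pos h1, abs_of_pos h2]; exact add_le_add h3 h4)
      (hg.add hg)
      (by
        filter_upwards [hLcont] with θ hc
        have : Tendsto (fun y' => |L y' θ - L y θ|) (nhds y) (nhds |L y θ - L y θ|) :=
          ((hc.tendsto y).sub_const _).abs
        simpa using this)
    simpa using this
  -- squeeze
  apply squeeze_zero' (Eventually.of_forall fun y' =>
      integral_nonneg fun θ => sq_nonneg _)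
    (Eventually.of_forall fun y' => ?_) hL1
  apply integral_mono_of_nonneg (Eventually.of_forall fun θ => sq_nonneg _)
    ((hLint y').sub (hLint y)).abs
  filter_upwards [hLpos y', hLpos y] with θ h1 h2
  exact sqrt_sub_sq_le_abs h1.le h2.le
end

section
/- Under (A1)–(A4), the data-to-posterior map y ↦ μ_post(y), where dμ_post(y)/dμ_prior = L(y,·)/Z(y), is continuous from Y to Prob(X, μ_prior) equipped with the Hellinger distance. -/
open MeasureTheory Filter

lemma sq_sqrt_sub_le {a b : ℝ} (ha : 0 ≤ a) (hb : 0 ≤ b) :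
    (Real.sqrt a - Real.sqrt b) ^ 2 ≤ a + b := by
  nlinarith [Real.sqrt_nonneg a, Real.sqrt_nonneg b, Real.sq_sqrt ha, Real.sq_sqrt hb]

/-- under (A1)-(A4) the data-to-posterior map is continuous in the
Hellinger distance; the posterior density w.r.t. `μ_prior` is `L(y,·)/Z(y)`, and
continuity is expressed as convergence of the squared Hellinger distance to `0`. -/
theorem posterior_hellinger_continuous {X Y : Type*} [MeasurableSpace X] [MetricSpace Y]
    (μprior : Measure X) [IsProbabilityMeasure μprior]
    (L : Y → X → ℝ)
    (hLmeas : ∀ y, Measurable (L y))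
    (hLpos : ∀ y, ∀ᵐ θ ∂μprior, 0 < L y θ)
    (hLint : ∀ y, Integrable (L y) μprior)
    (g : X → ℝ) (hg : Integrable g μprior)
    (hdom : ∀ y, ∀ᵐ θ ∂μprior, L y θ ≤ g θ)
    (hLcont : ∀ᵐ θ ∂μprior, Continuous (fun y => L y θ)) :
    ∀ y : Y, Tendsto
      (fun y' => (1 / 2) * ∫ θ,
        (Real.sqrt (L y' θ / ∫ θ', L y' θ' ∂μprior)
          - Real.sqrt (L y θ / ∫ θ', L y θ' ∂μprior)) ^ 2 ∂μprior)
      (nhds y) (nhds 0) := by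
  intro y
  set Z : Y → ℝ := fun y' => ∫ θ', L y' θ' ∂μprior with hZ
  have hZpos : ∀ y', 0 < Z y' := by
    intro y'
    have h0 : 0 ≤ᵐ[μprior] L y' := (hLpos y').mono fun θ h => h.le
    rw [hZ]
    rw [integral_pos_iff_support_of_nonneg_ae h0 (hLint y')]
    have hsupp : ∀ᵐ θ ∂μprior, θ ∈ Function.support (L y') :=
      (hLpos y').mono fun θ h => ne_of_gt h
    have hc : μprior (Function.support (L y'))ᶜ = 0 := by
      simpa [Function.support, Set.compl_setOf] using ae_iff.1 hsupp
    have h1 : μprior Set.univ ≤ μprior (Function.support (L y')) := by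
      calc μprior Set.univ
          = μprior (Function.support (L y') ∪ (Function.support (L y'))ᶜ) := by
            rw [Set.union_compl_self]
        _ ≤ μprior (Function.support (L y')) + μprior (Function.support (L y'))ᶜ :=
            measure_union_le _ _
        _ = μprior (Function.support (L y')) := by rw [hc, add_zero]
    have : (1 : ENNReal) ≤ μprior (Function.support (L y')) := by
      simpa [measure_univ] using h1
    exact lt_of_lt_of_le zero_lt_one this
  have hZcont : Tendsto Z (nhds y) (nhds (Z y)) := by
    apply tendsto_integral_filter_of_dominated_convergence g
    · exact Eventually.of_forall fun y' => (hLmeas y').aestronglyMeasurable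
    · refine Eventually.of_forall fun y' => ((hLpos y').and (hdom y')).mono fun θ h => ?_
      rw [Real.norm_eq_abs, abs_of_pos h.1]; exact h.2
    · exact hg
    · exact hLcont.mono fun θ h => h.tendsto y
  have key : Tendsto
      (fun y' => ∫ θ, (Real.sqrt (L y' θ / Z y') - Real.sqrt (L y θ / Z y)) ^ 2 ∂μprior)
      (nhds y) (nhds 0) := by
    have h0 : (0 : ℝ) = ∫ _θ, (0 : ℝ) ∂μprior := by simp
    rw [h0]
    apply tendsto_integral_filter_of_dominated_convergence (fun θ => 3 * g θ / Z y)
    · refine Eventually.of_forall fun y' => ?_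
      exact ((((hLmeas y').div_const (Z y')).sqrt.sub
        ((hLmeas y).div_const (Z y)).sqrt).pow_const 2).aestronglyMeasurable
    · have hev : ∀ᶠ y' in nhds y, Z y / 2 < Z y' :=
        hZcont.eventually (eventually_gt_nhds (half_lt_self (hZpos y)))
      filter_upwards [hev] with y' hy'
      filter_upwards [hLpos y', hdom y', hLpos y, hdom y] with θ hp' hd' hp hd
      have hgpos : 0 < g θ := lt_of_lt_of_le hp hd
      have hZy := hZpos y
      have ha : 0 ≤ L y' θ / Z y' := div_nonneg hp'.le (hZpos y').le
      have hb : 0 ≤ L y θ / Z y := div_nonneg hp.le hZy.le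
      have h1 : L y' θ / Z y' ≤ g θ / (Z y / 2) :=
        div_le_div₀ hgpos.le hd' (by linarith) hy'.le
      have hq : g θ / (Z y / 2) = 2 * g θ / Z y := by field_simp
      rw [hq] at h1
      have h2' : L y θ / Z y ≤ g θ / Z y := by gcongr
      rw [Real.norm_eq_abs, abs_of_nonneg (sq_nonneg _)]
      calc (Real.sqrt (L y' θ / Z y') - Real.sqrt (L y θ / Z y)) ^ 2
          ≤ L y' θ / Z y' + L y θ / Z y := sq_sqrt_sub_le ha hb
        _ ≤ 2 * g θ / Z y + g θ / Z y := add_le_add h1 h2'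
        _ = 3 * g θ / Z y := by ring
    · exact (hg.const_mul 3).div_const (Z y)
    · filter_upwards [hLcont, hLpos y] with θ hc hp
      have h1 : Tendsto (fun y' => L y' θ / Z y') (nhds y) (nhds (L y θ / Z y)) :=
        (hc.tendsto y).div hZcont (ne_of_gt (hZpos y))
      have h2 : Tendsto (fun y' => Real.sqrt (L y' θ / Z y')) (nhds y)
          (nhds (Real.sqrt (L y θ / Z y))) :=
        (Real.continuous_sqrt.tendsto _).comp h1
      have h3 : Tendsto
          (fun y' => (Real.sqrt (L y' θ / Z y') - Real.sqrt (L y θ / Z y)) ^ 2) (nhds y)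
          (nhds ((Real.sqrt (L y θ / Z y) - Real.sqrt (L y θ / Z y)) ^ 2)) :=
        (h2.sub tendsto_const_nhds).pow 2
      simpa using h3
    -- done
  simpa using key.const_mul (1 / 2 : ℝ)
end
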